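/- arXiv:1601.04533 — 2 statements merged into one kernel-verified Lean document; each statement's English description precedes it below -/
import Mathlib

section
/- The Wu characteristic of any triangle-free connected finite simple graph is at least -1, with equality attained by path graphs. -/
open Finset

variable {V : Type*} [Fintype V] [DecidableEq V]

/-- The simplices of a graph: nonempty complete subgraphs, encoded as vertex sets. -/
def simplices (G : SimpleGraph V) [DecidableRel G.Adj] : Finset (Finset V) :=
  Finset.univ.filter fun s => s.Nonempty ∧ ∀ a ∈ s, ∀ b ∈ s, a ≠ b → G.Adj a b

/-- dimension of a simplex -/
def dimS (s : Finset V) : ℕ := s.card - 1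

/-- Euler characteristic -/
def euler (G : SimpleGraph V) [DecidableRel G.Adj] : ℤ :=
  ∑ s ∈ simplices G, (-1 : ℤ) ^ dimS s

/-- Wu characteristic -/
def wu (G : SimpleGraph V) [DecidableRel G.Adj] : ℤ :=
  ∑ x ∈ simplices G, ∑ y ∈ simplices G,
    if (x ∩ y).Nonempty then (-1 : ℤ) ^ (dimS x + dimS y) else 0

/-- number of (k+1)-cliques, the k-th entry of the f-vector -/
def nf (G : SimpleGraph V) [DecidableRel G.Adj] (k : ℕ) : ℕ :=
  ((simplices G).filter fun s => s.card = k + 1).card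

/-! ### Auxiliary definitions -/

/-- The edges of `G` as 2-element simplices. -/
def S2 (G : SimpleGraph V) [DecidableRel G.Adj] : Finset (Finset V) :=
  (simplices G).filter fun s => s.card = 2

/-- The number of 2-element simplices containing `v` (the degree of `v`). -/
def dd (G : SimpleGraph V) [DecidableRel G.Adj] (v : V) : ℕ :=
  ((S2 G).filter fun s => v ∈ s).card

/-- The summand of the Wu characteristic. -/
def FF (x y : Finset V) : ℤ :=
  if (x ∩ y).Nonempty then (-1 : ℤ) ^ (dimS x + dimS y) else 0

section Lemmas

variable (G : SimpleGraph V) [DecidableRel G.Adj]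

lemma mem_simplices {s : Finset V} :
    s ∈ simplices G ↔ s.Nonempty ∧ ∀ a ∈ s, ∀ b ∈ s, a ≠ b → G.Adj a b := by
  simp [simplices]

lemma singleton_mem_simplices (v : V) : {v} ∈ simplices G := by
  rw [mem_simplices]
  refine ⟨singleton_nonempty v, ?_⟩
  simp

lemma card_of_mem_simplices (h3 : G.CliqueFree 3) {s : Finset V}
    (hs : s ∈ simplices G) : s.card = 1 ∨ s.card = 2 := by
  rw [mem_simplices] at hs
  have h1 : 1 ≤ s.card := card_pos.mpr hs.1
  by_contra h
  push_neg at h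
  have h3' : 3 ≤ s.card := by omega
  obtain ⟨t, hts, htc⟩ := Finset.exists_subset_card_eq h3'
  exact h3 t ⟨fun a ha b hb hab => hs.2 a (hts ha) b (hts hb) hab, htc⟩

lemma simplices_eq (h3 : G.CliqueFree 3) :
    simplices G = ((simplices G).filter fun s => s.card = 1) ∪ S2 G := by
  ext s
  simp only [S2, mem_union, mem_filter]
  constructor
  · intro hs
    rcases card_of_mem_simplices G h3 hs with h | h
    · exact Or.inl ⟨hs, h⟩
    · exact Or.inr ⟨hs, h⟩
  · rintro (⟨hs, _⟩ | ⟨hs, _⟩) <;> exact hs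

lemma card_S1 : ((simplices G).filter fun s => s.card = 1).card = Fintype.card V := by
  have hS1 : ((simplices G).filter fun s => s.card = 1)
      = Finset.univ.image fun v => ({v} : Finset V) := by
    ext s
    simp only [mem_filter, mem_image, mem_univ, true_and]
    constructor
    · rintro ⟨-, hc⟩
      obtain ⟨v, rfl⟩ := card_eq_one.mp hc
      exact ⟨v, rfl⟩
    · rintro ⟨v, rfl⟩
      exact ⟨singleton_mem_simplices G v, card_singleton v⟩
  rw [hS1, Finset.card_image_of_injective _ (fun a b h => by simpa using h)]
  exact card_univ

lemma sum_dd : ∑ v, dd G v = 2 * (S2 G).card := by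
  have hrw : ∀ v, dd G v = ∑ s ∈ S2 G, if v ∈ s then 1 else 0 := by
    intro v
    rw [Finset.sum_boole]
    simp [dd]
  simp only [hrw]
  rw [Finset.sum_comm]
  rw [Finset.sum_congr rfl (fun s hs => ?_), Finset.sum_const, smul_eq_mul, mul_comm]
  rw [Finset.sum_boole]
  have huniv : Finset.univ.filter (fun v => v ∈ s) = s := by ext v; simp
  simp only [S2, mem_filter] at hs
  rw [huniv, hs.2]; rfl

omit [Fintype V] in
lemma FF_symm (x y : Finset V) : FF x y = FF y x := by
  rw [FF, FF, Finset.inter_comm, Nat.add_comm]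

lemma S1_disjoint_S2 :
    Disjoint ((simplices G).filter fun s => s.card = 1) (S2 G) := by
  rw [Finset.disjoint_left]
  intro s h1 h2
  rw [mem_filter] at h1
  rw [S2, mem_filter] at h2
  omega

lemma blockA : (∑ x ∈ (simplices G).filter fun s => s.card = 1,
    ∑ y ∈ (simplices G).filter fun s => s.card = 1, FF x y) = (Fintype.card V : ℤ) := by
  set S1 := (simplices G).filter fun s => s.card = 1 with hS1
  have key : ∀ x ∈ S1, (∑ y ∈ S1, FF x y) = 1 := by
    intro x hx
    have hstep : ∀ y ∈ S1, FF x y = if y = x then (1 : ℤ) else 0 := by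
      intro y hy
      obtain ⟨v, rfl⟩ := card_eq_one.mp (mem_filter.mp hx).2
      obtain ⟨w, rfl⟩ := card_eq_one.mp (mem_filter.mp hy).2
      by_cases h : w = v <;>
        simp [FF, dimS, h, Finset.singleton_inter_of_mem, Finset.singleton_inter_of_notMem]
    rw [Finset.sum_congr rfl hstep, Finset.sum_ite_eq' S1 x (fun _ => (1:ℤ)), if_pos hx]
  rw [Finset.sum_congr rfl key, Finset.sum_const, card_S1]
  simp

lemma blockB : (∑ y ∈ S2 G, ∑ x ∈ (simplices G).filter fun s => s.card = 1, FF x y)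
    = -2 * ((S2 G).card : ℤ) := by
  set S1 := (simplices G).filter fun s => s.card = 1 with hS1
  have key : ∀ y ∈ S2 G, (∑ x ∈ S1, FF x y) = -2 := by
    intro y hy
    have hy2 : y.card = 2 := (mem_filter.mp hy).2
    have step : ∀ x ∈ S1, FF x y = if (x ∩ y).Nonempty then (-1 : ℤ) else 0 := by
      intro x hx
      have hx1 : x.card = 1 := (mem_filter.mp hx).2
      rw [FF, dimS, dimS, hx1, hy2]
      norm_num
    rw [Finset.sum_congr rfl step]
    have hsum : (∑ x ∈ S1, if (x ∩ y).Nonempty then (-1 : ℤ) else 0)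
        = -((S1.filter fun x => (x ∩ y).Nonempty).card : ℤ) := by
      rw [Finset.sum_ite, Finset.sum_const, Finset.sum_const]
      simp
    rw [hsum]
    have hfil : (S1.filter fun x => (x ∩ y).Nonempty) = y.image fun v => ({v} : Finset V) := by
      ext s
      simp only [mem_filter, mem_image]
      constructor
      · rintro ⟨hs, hne⟩
        obtain ⟨v, rfl⟩ := card_eq_one.mp (mem_filter.mp hs).2
        obtain ⟨w, hw⟩ := hne
        rw [Finset.mem_inter, Finset.mem_singleton] at hw
        exact ⟨v, hw.1 ▸ hw.2, rfl⟩
      · rintro ⟨v, hv, rfl⟩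
        refine ⟨mem_filter.mpr ⟨singleton_mem_simplices G v, card_singleton v⟩, ⟨v, ?_⟩⟩
        rw [Finset.mem_inter]
        exact ⟨Finset.mem_singleton_self v, hv⟩
    rw [hfil, Finset.card_image_of_injective _ (fun a b h => by simpa using h), hy2]
    norm_num
  rw [Finset.sum_congr rfl key, Finset.sum_const]
  push_cast
  ring

omit [Fintype V] in
lemma FF_two_two {x y : Finset V} (hx : x.card = 2) (hy : y.card = 2) :
    FF x y = ((x ∩ y).card : ℤ) - if x = y then 1 else 0 := by
  by_cases hxy : x = y
  · subst hxy
    have hne : (x ∩ x).Nonempty := by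
      rw [Finset.inter_self]
      exact Finset.card_pos.mp (by omega)
    rw [FF, if_pos hne, Finset.inter_self, hx, dimS, hx]
    norm_num
  · have hle : (x ∩ y).card ≤ 1 := by
      by_contra h
      push_neg at h
      have h1 : x ∩ y ⊆ x := Finset.inter_subset_left
      have h2 : x ∩ y ⊆ y := Finset.inter_subset_right
      have e1 : x ∩ y = x := Finset.eq_of_subset_of_card_le h1 (by omega)
      have e2 : x ∩ y = y := Finset.eq_of_subset_of_card_le h2 (by omega)
      exact hxy (e1 ▸ e2)
    rw [if_neg hxy, FF, dimS, dimS, hx, hy]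
    by_cases hne : (x ∩ y).Nonempty
    · have hone : (x ∩ y).card = 1 := le_antisymm hle (Finset.card_pos.mpr hne)
      rw [if_pos hne, hone]
      norm_num
    · rw [if_neg hne, Finset.not_nonempty_iff_eq_empty.mp hne]
      simp

lemma blockD : (∑ x ∈ S2 G, ∑ y ∈ S2 G, FF x y)
    = (∑ v, (dd G v : ℤ) ^ 2) - ((S2 G).card : ℤ) := by
  have hc : ∀ x ∈ S2 G, x.card = 2 := fun x hx => (mem_filter.mp hx).2
  have step1 : (∑ x ∈ S2 G, ∑ y ∈ S2 G, FF x y)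
      = (∑ x ∈ S2 G, ∑ y ∈ S2 G, ((x ∩ y).card : ℤ))
        - ∑ x ∈ S2 G, ∑ y ∈ S2 G, (if x = y then (1:ℤ) else 0) := by
    rw [← Finset.sum_sub_distrib]
    apply Finset.sum_congr rfl
    intro x hx
    rw [← Finset.sum_sub_distrib]
    exact Finset.sum_congr rfl fun y hy => FF_two_two (hc x hx) (hc y hy)
  have step2 : (∑ x ∈ S2 G, ∑ y ∈ S2 G, (if x = y then (1:ℤ) else 0)) = ((S2 G).card : ℤ) := by
    have hstep : ∀ x ∈ S2 G, (∑ y ∈ S2 G, if x = y then (1:ℤ) else 0) = 1 := by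
      intro x hx
      rw [Finset.sum_ite_eq (S2 G) x (fun _ => (1:ℤ)), if_pos hx]
    rw [Finset.sum_congr rfl hstep, Finset.sum_const]
    simp
  have inter_card : ∀ x y : Finset V, ((x ∩ y).card : ℤ)
      = ∑ v, (if v ∈ x then (1:ℤ) else 0) * (if v ∈ y then (1:ℤ) else 0) := by
    intro x y
    have hpt : ∀ v : V, (if v ∈ x then (1:ℤ) else 0) * (if v ∈ y then (1:ℤ) else 0)
        = if v ∈ x ∧ v ∈ y then (1:ℤ) else 0 := by
      intro v
      by_cases h1 : v ∈ x <;> by_cases h2 : v ∈ y <;> simp [h1, h2]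
    rw [Finset.sum_congr rfl fun v _ => hpt v, Finset.sum_boole]
    congr 1
    rw [show (Finset.univ.filter fun v => v ∈ x ∧ v ∈ y) = x ∩ y from by ext v; simp]
  have step3 : (∑ x ∈ S2 G, ∑ y ∈ S2 G, ((x ∩ y).card : ℤ)) = ∑ v, (dd G v : ℤ) ^ 2 := by
    simp only [inter_card]
    rw [Finset.sum_congr rfl fun x _ => Finset.sum_comm]
    rw [Finset.sum_comm]
    apply Finset.sum_congr rfl
    intro v _
    rw [← Finset.sum_mul_sum]
    have hdd : (∑ x ∈ S2 G, if v ∈ x then (1:ℤ) else 0) = (dd G v : ℤ) := by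
      rw [Finset.sum_boole, dd]
    rw [hdd, sq]
  rw [step1, step2, step3]

lemma wu_formula (h3 : G.CliqueFree 3) :
    wu G = (Fintype.card V : ℤ) - 5 * ((S2 G).card : ℤ) + ∑ v, (dd G v : ℤ) ^ 2 := by
  set S1 := (simplices G).filter fun s => s.card = 1 with hS1
  have hdisj := S1_disjoint_S2 G
  have hwu : wu G = (∑ x ∈ S1, ∑ y ∈ S1, FF x y) + (∑ x ∈ S1, ∑ y ∈ S2 G, FF x y)
      + ((∑ x ∈ S2 G, ∑ y ∈ S1, FF x y) + ∑ x ∈ S2 G, ∑ y ∈ S2 G, FF x y) := by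
    show (∑ x ∈ simplices G, ∑ y ∈ simplices G, FF x y) = _
    rw [simplices_eq G h3, Finset.sum_union hdisj]
    have hin : ∀ (s : Finset (Finset V)), (∑ x ∈ s, ∑ y ∈ S1 ∪ S2 G, FF x y)
        = (∑ x ∈ s, ((∑ y ∈ S1, FF x y) + ∑ y ∈ S2 G, FF x y)) :=
      fun s => Finset.sum_congr rfl fun x _ => Finset.sum_union hdisj
    rw [hin, hin, Finset.sum_add_distrib, Finset.sum_add_distrib]
  have hB : (∑ x ∈ S1, ∑ y ∈ S2 G, FF x y) = -2 * ((S2 G).card : ℤ) := by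
    rw [Finset.sum_comm]
    exact blockB G
  have hC : (∑ x ∈ S2 G, ∑ y ∈ S1, FF x y) = -2 * ((S2 G).card : ℤ) := by
    rw [Finset.sum_congr rfl fun x _ => Finset.sum_congr rfl fun y _ => FF_symm x y]
    exact blockB G
  rw [hwu, blockA G, hB, hC, blockD G]
  ring

lemma pair_mem_S2 {v w : V} (h : G.Adj v w) : ({v, w} : Finset V) ∈ S2 G := by
  rw [S2, mem_filter, mem_simplices]
  refine ⟨⟨⟨v, by simp⟩, ?_⟩, Finset.card_pair h.ne⟩
  intro a ha b hb hab
  simp only [Finset.mem_insert, Finset.mem_singleton] at ha hb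
  rcases ha with rfl | rfl <;> rcases hb with rfl | rfl
  · exact absurd rfl hab
  · exact h
  · exact h.symm
  · exact absurd rfl hab

lemma card_bound (hc : G.Connected) : Fintype.card V ≤ (S2 G).card + 1 := by
  obtain ⟨r⟩ := hc.nonempty
  have key : ∀ v : V, ∃ w : V, v ≠ r → G.Adj v w ∧ G.dist w r < G.dist v r := by
    intro v
    by_cases hv : v = r
    · exact ⟨r, fun h => absurd hv h⟩
    · obtain ⟨p, hp⟩ := hc.exists_walk_length_eq_dist v r
      cases p with
      | nil => exact absurd rfl hv
      | @cons _ w _ h q =>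
        refine ⟨w, fun _ => ⟨h, ?_⟩⟩
        have h1 : G.dist w r ≤ q.length := SimpleGraph.dist_le q
        have h2 : q.length + 1 = G.dist v r := by simpa using hp
        omega
  choose f hf using key
  have hmaps : ∀ v ∈ Finset.univ.erase r, ({v, f v} : Finset V) ∈ S2 G :=
    fun v hv => pair_mem_S2 G ((hf v (Finset.ne_of_mem_erase hv)).1)
  have hinj : Set.InjOn (fun v => ({v, f v} : Finset V)) ↑(Finset.univ.erase r) := by
    intro v hv w hw heq
    simp only [Finset.coe_erase, Set.mem_diff, Finset.mem_coe, Finset.mem_univ,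
      Set.mem_singleton_iff, true_and] at hv hw
    simp only at heq
    have h1 : v ∈ ({w, f w} : Finset V) := heq ▸ Finset.mem_insert_self v {f v}
    rcases Finset.mem_insert.mp h1 with h | h
    · exact h
    · have h2 : w ∈ ({v, f v} : Finset V) := heq.symm ▸ Finset.mem_insert_self w {f w}
      rcases Finset.mem_insert.mp h2 with h' | h'
      · exact h'.symm
      · rw [Finset.mem_singleton] at h h'
        have d1 := (hf v hv).2
        have d2 := (hf w hw).2
        rw [← h'] at d1
        rw [← h] at d2
        omega
  have hle := Finset.card_le_card_of_injOn _ hmaps hinj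
  rw [Finset.card_erase_of_mem (Finset.mem_univ r), Finset.card_univ] at hle
  have hpos : 0 < Fintype.card V := Fintype.card_pos_iff.mpr ⟨r⟩
  omega

lemma dd_eq_degree (v : V) : dd G v = G.degree v := by
  rw [dd]
  have heq : ((S2 G).filter fun s => v ∈ s)
      = (G.neighborFinset v).image fun w => ({v, w} : Finset V) := by
    ext s
    simp only [mem_filter, mem_image, SimpleGraph.mem_neighborFinset]
    constructor
    · rintro ⟨hs2, hvs⟩
      have hc : s.card = 2 := (mem_filter.mp hs2).2
      have hcl := (mem_simplices G).mp (mem_filter.mp hs2).1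
      obtain ⟨a, b, hab, rfl⟩ := Finset.card_eq_two.mp hc
      simp only [Finset.mem_insert, Finset.mem_singleton] at hvs
      rcases hvs with rfl | rfl
      · exact ⟨b, hcl.2 v (by simp) b (by simp) hab, rfl⟩
      · refine ⟨a, hcl.2 v (by simp) a (by simp) (Ne.symm hab), ?_⟩
        exact (Finset.pair_comm a v).symm
    · rintro ⟨w, hw, rfl⟩
      exact ⟨pair_mem_S2 G hw, Finset.mem_insert_self v {w}⟩
  rw [heq, Finset.card_image_of_injOn, SimpleGraph.card_neighborFinset_eq_degree]
  intro a ha b hb hab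
  simp only [SimpleGraph.mem_neighborFinset, Finset.mem_coe] at ha hb
  simp only at hab
  have hmem : a ∈ ({v, b} : Finset V) :=
    hab ▸ Finset.mem_insert_of_mem (Finset.mem_singleton_self a)
  rcases Finset.mem_insert.mp hmem with h | h
  · exact absurd h.symm (SimpleGraph.Adj.ne ha)
  · exact Finset.mem_singleton.mp h

end Lemmas

/-! ### Path graph computations -/

lemma path_degree (n : ℕ) (v : Fin n) :
    letI : DecidableRel (SimpleGraph.pathGraph n).Adj := Classical.decRel _
    (SimpleGraph.pathGraph n).degree v
      = (if v.1 + 1 < n then 1 else 0) + (if 0 < v.1 then 1 else 0) := by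
  letI : DecidableRel (SimpleGraph.pathGraph n).Adj := Classical.decRel _
  rw [← SimpleGraph.card_neighborFinset_eq_degree]
  have h1 : (SimpleGraph.pathGraph n).neighborFinset v
      = (Finset.univ.filter fun u : Fin n => v.1 + 1 = u.1)
        ∪ (Finset.univ.filter fun u : Fin n => u.1 + 1 = v.1) := by
    ext u
    simp only [SimpleGraph.mem_neighborFinset, SimpleGraph.pathGraph_adj, Finset.mem_union,
      Finset.mem_filter, Finset.mem_univ, true_and]
  rw [h1, Finset.card_union_of_disjoint]
  · congr 1
    · by_cases h : v.1 + 1 < n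
      · rw [if_pos h, show (Finset.univ.filter fun u : Fin n => v.1 + 1 = u.1) = {⟨v.1+1, h⟩} from
          by ext u; simp [Fin.ext_iff]; omega]
        simp
      · rw [if_neg h, show (Finset.univ.filter fun u : Fin n => v.1 + 1 = u.1) = ∅ from
          by ext u; simp [Fin.ext_iff]; omega]
        simp
    · by_cases h : 0 < v.1
      · rw [if_pos h, show (Finset.univ.filter fun u : Fin n => u.1 + 1 = v.1)
            = {⟨v.1 - 1, by omega⟩} from by ext u; simp [Fin.ext_iff]; omega]
        simp
      · rw [if_neg h, show (Finset.univ.filter fun u : Fin n => u.1 + 1 = v.1) = ∅ from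
          by ext u; simp [Fin.ext_iff]; omega]
        simp
  · rw [Finset.disjoint_left]
    intro u hu1 hu2
    simp only [Finset.mem_filter] at hu1 hu2
    omega

lemma path_cliquefree (n : ℕ) : (SimpleGraph.pathGraph n).CliqueFree 3 := by
  intro t ht
  obtain ⟨a, b, c, hab, hac, hbc, rfl⟩ := Finset.card_eq_three.mp ht.2
  have h1 := ht.1 (Finset.mem_insert_self a _) (by simp) hab
  have h2 := ht.1 (Finset.mem_insert_self a _) (by simp) hac
  have h3 := ht.1 (show b ∈ _ by simp) (show c ∈ _ by simp) hbc
  rw [SimpleGraph.pathGraph_adj] at h1 h2 h3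
  have hab' : a.1 ≠ b.1 := fun h => hab (Fin.ext h)
  have hac' : a.1 ≠ c.1 := fun h => hac (Fin.ext h)
  have hbc' : b.1 ≠ c.1 := fun h => hbc (Fin.ext h)
  omega

lemma sum_e1 (n : ℕ) (hn : 2 ≤ n) :
    (∑ v : Fin n, if v.1 + 1 < n then (1:ℤ) else 0) = n - 1 := by
  rw [Fin.sum_univ_eq_sum_range (fun i => if i + 1 < n then (1:ℤ) else 0) n]
  rw [Finset.sum_boole, show (Finset.range n).filter (fun i => i + 1 < n) = Finset.range (n-1)
    from by ext i; simp; omega, Finset.card_range]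
  omega

lemma sum_e2 (n : ℕ) (hn : 2 ≤ n) :
    (∑ v : Fin n, if 0 < v.1 then (1:ℤ) else 0) = n - 1 := by
  rw [Fin.sum_univ_eq_sum_range (fun i => if 0 < i then (1:ℤ) else 0) n]
  rw [Finset.sum_boole, show (Finset.range n).filter (fun i => 0 < i) = Finset.Ico 1 n
    from by ext i; simp; omega, Nat.card_Ico]
  omega

lemma sum_ite_range (n : ℕ) (hn : 2 ≤ n) :
    (∑ v : Fin n, ((if v.1 + 1 < n then (1:ℤ) else 0) + (if 0 < v.1 then (1:ℤ) else 0)) ^ 2)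
      = 4 * n - 6 := by
  have expand : ∀ v : Fin n,
      ((if v.1 + 1 < n then (1:ℤ) else 0) + (if 0 < v.1 then (1:ℤ) else 0)) ^ 2
      = (if v.1 + 1 < n then (1:ℤ) else 0) + 2 * (if 0 < v.1 ∧ v.1 + 1 < n then (1:ℤ) else 0)
        + (if 0 < v.1 then (1:ℤ) else 0) := by
    intro v
    by_cases h1 : v.1 + 1 < n <;> by_cases h2 : 0 < v.1 <;> simp [h1, h2]
  rw [Finset.sum_congr rfl fun v _ => expand v]
  rw [Finset.sum_add_distrib, Finset.sum_add_distrib, ← Finset.mul_sum]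
  have e3 : (∑ v : Fin n, if 0 < v.1 ∧ v.1 + 1 < n then (1:ℤ) else 0) = n - 2 := by
    rw [Fin.sum_univ_eq_sum_range (fun i => if 0 < i ∧ i + 1 < n then (1:ℤ) else 0) n]
    rw [Finset.sum_boole, show (Finset.range n).filter (fun i => 0 < i ∧ i + 1 < n)
      = Finset.Ico 1 (n-1) from by ext i; simp; omega, Nat.card_Ico]
    omega
  rw [sum_e1 n hn, sum_e2 n hn, e3]
  ring

/-! ### Main theorem -/

theorem wu_triangle_free_connected_ge_neg_one :
    (∀ (V : Type) [Fintype V] [DecidableEq V] (G : SimpleGraph V)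
      [DecidableRel G.Adj], G.Connected → G.CliqueFree 3 → -1 ≤ wu G) ∧
    (∀ n : ℕ, 2 ≤ n →
      @wu (Fin n) _ _ (SimpleGraph.pathGraph n) (Classical.decRel _) = -1) := by
  constructor
  · intro V _ _ G _ hconn h3
    rw [wu_formula G h3]
    have hsq : ∀ v : V, 3 * (dd G v : ℤ) - 2 ≤ (dd G v : ℤ) ^ 2 := by
      intro v
      rcases le_or_gt ((dd G v : ℤ)) 1 with h | h <;> nlinarith
    have hsum : 3 * (∑ v, (dd G v : ℤ)) - 2 * (Fintype.card V : ℤ)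
        ≤ ∑ v, (dd G v : ℤ) ^ 2 := by
      calc 3 * (∑ v, (dd G v : ℤ)) - 2 * (Fintype.card V : ℤ)
          = ∑ v : V, (3 * (dd G v : ℤ) - 2) := by
            rw [Finset.sum_sub_distrib, ← Finset.mul_sum, Finset.sum_const, Finset.card_univ]
            push_cast
            ring
        _ ≤ ∑ v, (dd G v : ℤ) ^ 2 := Finset.sum_le_sum fun v _ => hsq v
    have hdd : (∑ v, (dd G v : ℤ)) = 2 * ((S2 G).card : ℤ) := by
      exact_mod_cast congrArg (Nat.cast : ℕ → ℤ) (sum_dd G)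
    have hb : (Fintype.card V : ℤ) ≤ ((S2 G).card : ℤ) + 1 := by
      exact_mod_cast card_bound G hconn
    linarith
  · intro n hn
    letI : DecidableRel (SimpleGraph.pathGraph n).Adj := Classical.decRel _
    rw [wu_formula _ (path_cliquefree n)]
    have hddv : ∀ v : Fin n, (dd (SimpleGraph.pathGraph n) v : ℤ)
        = (if v.1 + 1 < n then (1:ℤ) else 0) + (if 0 < v.1 then (1:ℤ) else 0) := by
      intro v
      rw [dd_eq_degree, path_degree n v]
      push_cast
      rfl
    have hsum2 : (∑ v : Fin n, (dd (SimpleGraph.pathGraph n) v : ℤ) ^ 2)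
        = 4 * n - 6 := by
      rw [Finset.sum_congr rfl fun v _ => by rw [hddv v]]
      exact sum_ite_range n hn
    have hsum1 : (∑ v : Fin n, (dd (SimpleGraph.pathGraph n) v : ℤ)) = 2 * n - 2 := by
      rw [Finset.sum_congr rfl fun v _ => hddv v, Finset.sum_add_distrib,
        sum_e1 n hn, sum_e2 n hn]
      ring
    have hdd : (∑ v : Fin n, (dd (SimpleGraph.pathGraph n) v : ℤ))
        = 2 * ((S2 (SimpleGraph.pathGraph n)).card : ℤ) := by
      exact_mod_cast congrArg (Nat.cast : ℕ → ℤ) (sum_dd (SimpleGraph.pathGraph n))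
    have hm : ((S2 (SimpleGraph.pathGraph n)).card : ℤ) = n - 1 := by
      rw [hsum1] at hdd
      linarith
    rw [hsum2, hm, Fintype.card_fin]
    ring
end

section
/- Index expectation for Euler characteristic: for a finite simple graph G, if f is chosen uniformly at random among all injective functions from V to {1,...,n} with n = |V| (equivalently, a uniformly random linear order on V), then for each vertex v the expected value of the Poincaré-Hopf index i_f(v) = 1 - χ(S⁻_f(v)) equals the curvature K(v) = Σ_{k≥0} (-1)^k V_{k-1}(v)/(k+1), where V_k(v) = v_k(S(v)) and V_{-1}(v) = 1. -/
open Finset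

variable {V : Type*} [Fintype V] [DecidableEq V]

instance inducedDecidable (G : SimpleGraph V) [DecidableRel G.Adj] (s : Set V)
    [DecidablePred (· ∈ s)] : DecidableRel (SimpleGraph.induce s G).Adj :=
  fun a b => inferInstanceAs (Decidable (G.Adj a b))

/-- The unit sphere of `G` at `v`: the subgraph induced on the neighbors of `v`. -/
def sphere (G : SimpleGraph V) [DecidableRel G.Adj] (v : V) :
    SimpleGraph ((G.neighborFinset v : Set V)) :=
  SimpleGraph.induce (G.neighborFinset v : Set V) G

instance sphereDecidable (G : SimpleGraph V) [DecidableRel G.Adj] (v : V) :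
    DecidableRel (sphere G v).Adj :=
  fun a b => inferInstanceAs (Decidable (G.Adj a b))

/-- `V_{k-1}(v)`, with the convention `V_{-1}(v) = 1`. -/
def sphereCount (G : SimpleGraph V) [DecidableRel G.Adj] (v : V) (k : ℕ) : ℕ :=
  if k = 0 then 1 else nf (sphere G v) (k - 1)

/-- Vertices in the sphere at `v` where `f` takes smaller values. -/
def SminusN (G : SimpleGraph V) [DecidableRel G.Adj] (f : V → ℕ) (v : V) : Finset V :=
  (G.neighborFinset v).filter (fun w => f w < f v)

/-! ### Auxiliary lemmas -/

lemma simplices_induce (G : SimpleGraph V) [DecidableRel G.Adj] (s : Finset V) :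
    (simplices (SimpleGraph.induce ((s : Finset V) : Set V) G)).map
        ((Finset.mapEmbedding (Function.Embedding.subtype _)).toEmbedding)
      = (simplices G).filter (fun t => t ⊆ s) := by
  classical
  ext u
  simp only [mem_map, simplices, mem_filter, mem_univ, true_and,
    RelEmbedding.coe_toEmbedding, Finset.mapEmbedding_apply]
  constructor
  · rintro ⟨t, ⟨ht1, ht2⟩, rfl⟩
    refine ⟨⟨ht1.map, ?_⟩, ?_⟩
    · intro a ha b hb hab
      simp only [mem_map, Function.Embedding.coe_subtype] at ha hb
      obtain ⟨a', ha', rfl⟩ := ha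
      obtain ⟨b', hb', rfl⟩ := hb
      exact ht2 a' ha' b' hb' (fun h => hab (congrArg _ h))
    · intro a ha
      simp only [mem_map, Function.Embedding.coe_subtype] at ha
      obtain ⟨a', _, rfl⟩ := ha
      exact a'.2
  · rintro ⟨⟨hne, hadj⟩, hsub⟩
    refine ⟨u.subtype _, ⟨?_, ?_⟩, ?_⟩
    · obtain ⟨x, hx⟩ := hne
      exact ⟨⟨x, Finset.mem_coe.mpr (hsub hx)⟩, Finset.mem_subtype.mpr hx⟩
    · intro a ha b hb hab
      exact hadj a (Finset.mem_subtype.mp ha) b (Finset.mem_subtype.mp hb)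
        (Subtype.coe_ne_coe.mpr hab)
    · rw [Finset.subtype_map]
      exact Finset.filter_true_of_mem (fun x hx => Finset.mem_coe.mpr (hsub hx))

lemma euler_induce (G : SimpleGraph V) [DecidableRel G.Adj] (s : Finset V) :
    euler (SimpleGraph.induce ((s : Finset V) : Set V) G) =
      ∑ t ∈ (simplices G).filter (fun t => t ⊆ s), (-1 : ℤ) ^ dimS t := by
  classical
  rw [euler, ← simplices_induce G s, Finset.sum_map]
  refine Finset.sum_congr rfl fun t _ => ?_
  rw [RelEmbedding.coe_toEmbedding, Finset.mapEmbedding_apply, dimS, dimS, Finset.card_map]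

lemma nf_induce (G : SimpleGraph V) [DecidableRel G.Adj] (s : Finset V) (k : ℕ) :
    nf (SimpleGraph.induce ((s : Finset V) : Set V) G) k =
      (((simplices G).filter (fun t => t ⊆ s)).filter (fun t => t.card = k + 1)).card := by
  classical
  rw [nf, ← simplices_induce G s, Finset.filter_map, Finset.card_map]
  congr 1
  refine Finset.filter_congr fun t _ => ?_
  rw [Function.comp, RelEmbedding.coe_toEmbedding, Finset.mapEmbedding_apply, Finset.card_map]

lemma swap_mem_aux {t : Finset V} {a b : V} (hb : b ∈ t)
    {f : V ≃ Fin (Fintype.card V)}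
    (hf : ∀ w ∈ t.erase a, ((f w : ℕ)) < (f a : ℕ)) :
    ∀ w ∈ t.erase b, ((((Equiv.swap a b).trans f) w : ℕ)) <
      (((Equiv.swap a b).trans f) b : ℕ) := by
  intro w hw
  obtain ⟨hwb, hwt⟩ := Finset.mem_erase.mp hw
  simp only [Equiv.trans_apply, Equiv.swap_apply_right]
  by_cases hwa : w = a
  · subst hwa
    rw [Equiv.swap_apply_left]
    exact hf b (Finset.mem_erase.mpr ⟨fun h => hwb h.symm, hb⟩)
  · rw [Equiv.swap_apply_of_ne_of_ne hwa hwb]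
    exact hf w (Finset.mem_erase.mpr ⟨hwa, hwt⟩)

lemma count_lt (s : Finset V) (v : V) (hv : v ∉ s) :
    ((Finset.univ : Finset (V ≃ Fin (Fintype.card V))).filter
      (fun f => ∀ w ∈ s, ((f w : ℕ)) < (f v : ℕ))).card * (s.card + 1)
      = (Fintype.card V).factorial := by
  classical
  set t := insert v s with htdef
  have hvt : v ∈ t := mem_insert_self v s
  set A : V → Finset (V ≃ Fin (Fintype.card V)) :=
    fun u => Finset.univ.filter (fun f => ∀ w ∈ t.erase u, ((f w : ℕ)) < (f u : ℕ)) with hA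
  have hcards : ∀ u ∈ t, (A u).card = (A v).card := by
    intro u hu
    refine Finset.card_bij' (fun f _ => (Equiv.swap u v).trans f)
      (fun f _ => (Equiv.swap v u).trans f) ?_ ?_ ?_ ?_
    · intro f hf
      simp only [hA, Finset.mem_filter, Finset.mem_univ, true_and] at hf ⊢
      exact swap_mem_aux hvt hf
    · intro f hf
      simp only [hA, Finset.mem_filter, Finset.mem_univ, true_and] at hf ⊢
      exact swap_mem_aux hu hf
    · intro f _
      ext x
      simp only [Equiv.trans_apply]
      rw [Equiv.swap_comm v u]
      simp [Equiv.swap_apply_self]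
    · intro f _
      ext x
      simp only [Equiv.trans_apply]
      rw [Equiv.swap_comm v u]
      simp [Equiv.swap_apply_self]
  have hunion : t.biUnion A = Finset.univ := by
    refine Finset.eq_univ_of_forall fun f => ?_
    obtain ⟨u, hu, hmax⟩ := t.exists_max_image (fun w => (f w : ℕ)) ⟨v, hvt⟩
    refine Finset.mem_biUnion.mpr ⟨u, hu, ?_⟩
    simp only [hA, Finset.mem_filter, Finset.mem_univ, true_and]
    intro w hw
    obtain ⟨hwu, hwt⟩ := Finset.mem_erase.mp hw
    exact lt_of_le_of_ne (hmax w hwt) (fun h => hwu (f.injective (Fin.val_injective h)))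
  have hdisj : ∀ x ∈ t, ∀ y ∈ t, x ≠ y → Disjoint (A x) (A y) := by
    intro x _ y _ hxy
    refine Finset.disjoint_left.mpr fun f hfx hfy => ?_
    simp only [hA, Finset.mem_filter, Finset.mem_univ, true_and] at hfx hfy
    have h1 := hfx y (Finset.mem_erase.mpr ⟨hxy.symm, by assumption⟩)
    have h2 := hfy x (Finset.mem_erase.mpr ⟨hxy, by assumption⟩)
    omega
  have hsum : ∑ u ∈ t, (A u).card = (Fintype.card V).factorial := by
    rw [← Finset.card_biUnion hdisj, hunion, Finset.card_univ,
      Fintype.card_equiv (Fintype.equivFin V)]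
  rw [Finset.sum_congr rfl hcards, Finset.sum_const, smul_eq_mul,
    Finset.card_insert_of_notMem hv] at hsum
  rw [← hsum, mul_comm]
  congr 2
  rw [hA]
  simp only [htdef, Finset.erase_insert hv]

theorem index_expectation_euler (G : SimpleGraph V) [DecidableRel G.Adj] (v : V) :
    (∑ f : V ≃ Fin (Fintype.card V),
        ((1 - euler (SimpleGraph.induce
          ((SminusN G (fun w => ((f w : ℕ) + 1)) v : Finset V) : Set V) G) : ℤ) : ℚ))
        / ((Fintype.card V).factorial : ℚ)
      = ∑ k ∈ Finset.range (Fintype.card V + 1),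
          (-1 : ℚ) ^ k * (sphereCount G v k : ℚ) / (k + 1) := by
  classical
  have hfac : (((Fintype.card V).factorial : ℚ)) ≠ 0 :=
    Nat.cast_ne_zero.mpr (Nat.factorial_ne_zero _)
  rw [div_eq_iff hfac]
  -- the subset condition unfolded
  have hSm : ∀ (f : V ≃ Fin (Fintype.card V)) (t : Finset V),
      (t ⊆ SminusN G (fun w => ((f w : ℕ) + 1)) v) ↔
        (t ⊆ G.neighborFinset v ∧ ∀ w ∈ t, (f w : ℕ) < (f v : ℕ)) := by
    intro f t
    unfold SminusN
    constructor
    · intro h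
      refine ⟨fun x hx => (Finset.mem_filter.mp (h hx)).1, fun w hw => ?_⟩
      have h2 := (Finset.mem_filter.mp (h hw)).2
      simpa using h2
    · rintro ⟨h1, h2⟩ x hx
      refine Finset.mem_filter.mpr ⟨h1 hx, ?_⟩
      simpa using h2 x hx
  -- step 1: rewrite the summand via euler_induce and push casts
  have step1 : ∀ f : V ≃ Fin (Fintype.card V),
      ((1 - euler (SimpleGraph.induce
          ((SminusN G (fun w => ((f w : ℕ) + 1)) v : Finset V) : Set V) G) : ℤ) : ℚ)
        = 1 - ∑ t ∈ (simplices G).filter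
            (fun t => t ⊆ SminusN G (fun w => ((f w : ℕ) + 1)) v), (-1 : ℚ) ^ dimS t := by
    intro f
    rw [euler_induce]
    push_cast
    ring
  rw [Finset.sum_congr rfl fun f _ => step1 f]
  rw [Finset.sum_sub_distrib, Finset.sum_const, Finset.card_univ,
    Fintype.card_equiv (Fintype.equivFin V), nsmul_eq_mul, mul_one]
  -- step 2: swap the double sum and count
  have step2 : (∑ f : V ≃ Fin (Fintype.card V), ∑ t ∈ (simplices G).filter
          (fun t => t ⊆ SminusN G (fun w => ((f w : ℕ) + 1)) v), (-1 : ℚ) ^ dimS t)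
      = ∑ t ∈ (simplices G).filter (fun t => t ⊆ G.neighborFinset v),
          (-1 : ℚ) ^ dimS t * (((Fintype.card V).factorial : ℚ) / (t.card + 1)) := by
    simp_rw [Finset.sum_filter]
    rw [Finset.sum_comm]
    refine Finset.sum_congr rfl fun t ht => ?_
    simp only [simplices, Finset.mem_filter, Finset.mem_univ, true_and] at ht
    by_cases hnb : t ⊆ G.neighborFinset v
    · have hvt : v ∉ t := fun hvmem => by
        have := hnb hvmem
        rw [SimpleGraph.mem_neighborFinset] at this
        exact G.irrefl this
      have hcnt := count_lt t v hvt
      have hfil : (Finset.univ : Finset (V ≃ Fin (Fintype.card V))).filter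
            (fun f => t ⊆ SminusN G (fun w => ((f w : ℕ) + 1)) v)
          = Finset.univ.filter (fun f => ∀ w ∈ t, ((f w : ℕ)) < (f v : ℕ)) := by
        refine Finset.filter_congr fun f _ => ?_
        rw [hSm f t]
        simp [hnb]
      calc (∑ f : V ≃ Fin (Fintype.card V),
              if t ⊆ SminusN G (fun w => ((f w : ℕ) + 1)) v then (-1 : ℚ) ^ dimS t else 0)
          = ∑ f ∈ (Finset.univ : Finset (V ≃ Fin (Fintype.card V))).filter
              (fun f => t ⊆ SminusN G (fun w => ((f w : ℕ) + 1)) v), (-1 : ℚ) ^ dimS t := by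
            rw [Finset.sum_filter]
        _ = ((Finset.univ.filter (fun f : V ≃ Fin (Fintype.card V) =>
              ∀ w ∈ t, ((f w : ℕ)) < (f v : ℕ))).card : ℚ) * (-1 : ℚ) ^ dimS t := by
            rw [hfil, Finset.sum_const, nsmul_eq_mul]
        _ = if t ⊆ G.neighborFinset v then
              (-1 : ℚ) ^ dimS t * (((Fintype.card V).factorial : ℚ) / (t.card + 1)) else 0 := by
            rw [if_pos hnb]
            have hpos : ((t.card : ℚ) + 1) ≠ 0 := by positivity
            have hc : (((Finset.univ.filter (fun f : V ≃ Fin (Fintype.card V) =>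
                ∀ w ∈ t, ((f w : ℕ)) < (f v : ℕ))).card : ℚ))
                = ((Fintype.card V).factorial : ℚ) / ((t.card : ℚ) + 1) := by
              rw [eq_div_iff hpos]
              exact_mod_cast hcnt
            rw [hc]
            ring
    · rw [if_neg hnb]
      refine Finset.sum_eq_zero fun f _ => ?_
      rw [if_neg]
      intro hcon
      exact hnb ((hSm f t).mp hcon).1
  rw [step2]
  -- step 3: group by cardinality
  have step3 : (∑ t ∈ (simplices G).filter (fun t => t ⊆ G.neighborFinset v),
          (-1 : ℚ) ^ dimS t * (((Fintype.card V).factorial : ℚ) / (t.card + 1)))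
      = ∑ k ∈ Finset.range (Fintype.card V + 1),
          ((((simplices G).filter (fun t => t ⊆ G.neighborFinset v)).filter
              (fun t => t.card = k)).card : ℚ)
            * ((-1 : ℚ) ^ (k - 1) * (((Fintype.card V).factorial : ℚ) / (k + 1))) := by
    rw [← Finset.sum_fiberwise_of_maps_to (g := Finset.card)
      (fun t _ => Finset.mem_range.mpr (Nat.lt_succ_of_le (Finset.card_le_univ t)))]
    refine Finset.sum_congr rfl fun k _ => ?_
    rw [Finset.sum_congr rfl (fun t ht => ?_), Finset.sum_const, nsmul_eq_mul]
    have htk : t.card = k := (Finset.mem_filter.mp ht).2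
    rw [dimS, htk]
  rw [step3]
  -- step 4: identify fibers with sphereCount
  have hcard0 : (((simplices G).filter (fun t => t ⊆ G.neighborFinset v)).filter
      (fun t => t.card = 0)).card = 0 := by
    rw [Finset.card_eq_zero]
    refine Finset.filter_eq_empty_iff.mpr fun t ht => ?_
    simp only [simplices, Finset.mem_filter, Finset.mem_univ, true_and] at ht
    exact fun hc => (Finset.card_ne_zero_of_mem ht.1.1.choose_spec) hc
  have hcardk : ∀ j : ℕ, (((simplices G).filter (fun t => t ⊆ G.neighborFinset v)).filter
      (fun t => t.card = j + 1)).card = sphereCount G v (j + 1) := by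
    intro j
    rw [sphereCount]
    simp only [Nat.add_sub_cancel, Nat.succ_ne_zero, if_false]
    rw [show nf (sphere G v) j = _ from nf_induce G (G.neighborFinset v) j]
  -- step 5: final arithmetic
  rw [Finset.sum_mul]
  rw [Finset.sum_range_succ' _ (Fintype.card V), Finset.sum_range_succ' _ (Fintype.card V)]
  rw [hcard0]
  rw [Finset.sum_congr rfl (fun j _ => by rw [hcardk j])]
  have hsc0 : (sphereCount G v 0 : ℚ) = 1 := by rw [sphereCount]; simp
  rw [hsc0]
  set N := ((Fintype.card V).factorial : ℚ) with hN
  simp only [Nat.add_sub_cancel, Nat.cast_zero, zero_mul, add_zero, pow_zero, one_mul,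
    zero_add, div_one, mul_one]
  have key : ∀ j ∈ Finset.range (Fintype.card V),
      (sphereCount G v (j + 1) : ℚ) * ((-1 : ℚ) ^ j * (N / (((j + 1 : ℕ) : ℚ) + 1)))
      = -((-1 : ℚ) ^ (j + 1) * (sphereCount G v (j + 1) : ℚ) / (((j + 1 : ℕ) : ℚ) + 1) * N) := by
    intro j _
    have hpos : (((j + 1 : ℕ) : ℚ) + 1) ≠ 0 := by positivity
    rw [pow_succ]
    field_simp
  rw [Finset.sum_congr rfl key, Finset.sum_neg_distrib]
  ring
end
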